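/- arXiv:math/0510657 — 4 statements merged into one kernel-verified Lean document; each statement's English description precedes it below -/
import Mathlib

section
/- For every natural number n, X₀((7x + 20 y/y' - 24 y⁴/y'³)^{n+1}) = (n+1)·(27u²/y'⁴)·(7x + 20 y/y' - 24 y⁴/y'³)^n, where u = y'^2 - 4y^3. -/
open MvPolynomial

noncomputable section

abbrev P3 : Type := MvPolynomial (Fin 3) ℂ
/-- The field of rational functions `ℂ(x, y, y')`. -/
abbrev K : Type := FractionRing P3

/-- The derivation `X₀ = ∂/∂x + y' ∂/∂y + 6y² ∂/∂y'` on polynomials. -/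
def X0 (f : P3) : P3 :=
  pderiv 0 f + X 2 * pderiv 1 f + 6 * (X 1) ^ 2 * pderiv 2 f

def xK : K := algebraMap P3 K (X 0)
def yK : K := algebraMap P3 K (X 1)
def zK : K := algebraMap P3 K (X 2)  -- the coordinate y'
/-- `u = y'² - 4y³`. -/
def uK : K := zK ^ 2 - 4 * yK ^ 3

theorem Derivation.map_ofNat {R A : Type*} [CommSemiring R] [CommSemiring A] [Algebra R A]
    (D : Derivation R A A) (n : ℕ) [n.AtLeastTwo] : D (OfNat.ofNat n : A) = 0 := by
  rw [← Nat.cast_ofNat]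
  exact D.map_natCast n

theorem Derivation.map_seven_mul_add_div_sub_div {R F : Type*} [CommRing R] [Field F]
    [Algebra R F] (D : Derivation R F F) {x y z : F} (hz : z ≠ 0)
    (hDx : D x = 1) (hDy : D y = z) (hDz : D z = 6 * y ^ 2) :
    D (7 * x + 20 * y / z - 24 * y ^ 4 / z ^ 3) = 27 * (z ^ 2 - 4 * y ^ 3) ^ 2 / z ^ 4 := by
  rw [map_sub, map_add, D.leibniz_div, D.leibniz_div]
  simp only [D.leibniz, D.leibniz_pow, D.map_ofNat, hDx, hDy, hDz, smul_eq_mul, nsmul_eq_mul]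
  field_simp
  ring

theorem zK_ne_zero : zK ≠ 0 :=
  (map_ne_zero_iff _ (IsFractionRing.injective P3 K)).mpr (X_ne_zero _)

section

variable {D : Derivation ℂ K K}

theorem map_xK (hD : ∀ p : P3, D (algebraMap P3 K p) = algebraMap P3 K (X0 p)) :
    D xK = 1 := by
  simp [xK, hD, X0]

theorem map_yK (hD : ∀ p : P3, D (algebraMap P3 K p) = algebraMap P3 K (X0 p)) :
    D yK = zK := by
  simp [yK, hD, X0, zK]

theorem map_zK (hD : ∀ p : P3, D (algebraMap P3 K p) = algebraMap P3 K (X0 p)) :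
    D zK = 6 * yK ^ 2 := by
  simp [zK, hD, X0, yK, map_ofNat]

end

/-- For every `n : ℕ`, `X₀((7x + 20y/y′ - 24y⁴/y′³)^{n+1}) = (n+1) · (27u²/y′⁴) · (7x + 20y/y′ - 24y⁴/y′³)^n`,
for the (unique) derivation of `ℂ(x,y,y')` extending `X₀`. -/
theorem stmt2 (D : Derivation ℂ K K)
    (hD : ∀ p : P3, D (algebraMap P3 K p) = algebraMap P3 K (X0 p)) :
    ∀ n : ℕ,
      D ((7 * xK + 20 * yK / zK - 24 * yK ^ 4 / zK ^ 3) ^ (n + 1)) =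
        ((n : K) + 1) * (27 * uK ^ 2 / zK ^ 4) * (7 * xK + 20 * yK / zK - 24 * yK ^ 4 / zK ^ 3) ^ n := by
  intro n
  rw [D.leibniz_pow, D.map_seven_mul_add_div_sub_div zK_ne_zero (map_xK hD) (map_yK hD)
    (map_zK hD), nsmul_eq_mul, Nat.add_sub_cancel, uK]
  push_cast
  ring
end
end

section
/- There is no polynomial R ∈ ℂ[x, y, y'] satisfying X₀(R) = y, where X₀ = ∂/∂x + y' ∂/∂y + 6y² ∂/∂y'. -/
open MvPolynomial

noncomputable section

/-!
Grade `ℂ[x, y, y']` by the weights `x ↦ -1`, `y ↦ 2`, `y' ↦ 3`; then `X₀` raises the weight by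
one. Comparing the coefficients of `x^(2b+3c-2) y^b y'^c` on both sides of `X₀ R = y` therefore
gives a recurrence among the coefficients of the weight-one monomials `x^(2b+3c-1) y^b y'^c`
of `R`. After twisting these coefficients by `(-1)^c`, all terms of the recurrence are
nonnegative, the inhomogeneity `y` starts it off, and induction on `2b + 3c` shows that every
twisted coefficient with `(b, c) ≠ (0, 0)` is positive. So `R` would have nonzero coefficients
of arbitrarily high degree in `y`.
-/

open scoped ComplexOrder

def exponent (a b c : ℕ) : Fin 3 →₀ ℕ := Finsupp.equivFunOnFinite.symm ![a, b, c]

@[simp] lemma exponent_apply_zero (a b c : ℕ) : exponent a b c 0 = a := rfl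

@[simp] lemma exponent_apply_one (a b c : ℕ) : exponent a b c 1 = b := rfl

@[simp] lemma exponent_apply_two (a b c : ℕ) : exponent a b c 2 = c := rfl

lemma exponent_eq_iff {a b c a' b' c' : ℕ} :
    exponent a b c = exponent a' b' c' ↔ a = a' ∧ b = b' ∧ c = c' := by
  simp [exponent]

lemma coeff_X0_exponent (R : P3) (a b c : ℕ) :
    coeff (exponent a b c) (X0 R) =
      (a + 1) * coeff (exponent (a + 1) b c) R +
      (if c ≠ 0 then (b + 1) * coeff (exponent a (b + 1) (c - 1)) R else 0) +
      (if 2 ≤ b then 6 * (c + 1) * coeff (exponent a (b - 2) (c + 1)) R else 0) := by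
  rw [X0, ← map_ofNat C 6, C_mul_X_pow_eq_monomial]
  simp only [coeff_add, coeff_X_mul', coeff_monomial_mul', coeff_pderiv,
    Finsupp.mem_support_iff, Finsupp.single_le_iff, exponent_apply_one, exponent_apply_two]
  congr 1; congr 1
  · rw [show exponent a b c + Finsupp.single 0 1 = exponent (a + 1) b c by
      ext i; fin_cases i <;> simp]
    simp only [exponent_apply_zero]; ring
  · split_ifs with hc
    · rw [show exponent a b c - Finsupp.single 2 1 = exponent a b (c - 1) by
          ext i; fin_cases i <;> simp,
        show exponent a b (c - 1) + Finsupp.single 1 1 = exponent a (b + 1) (c - 1) by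
          ext i; fin_cases i <;> simp,
        exponent_apply_one]
      ring
    · rfl
  · split_ifs with hb
    · rw [show exponent a b c - Finsupp.single 1 2 = exponent a (b - 2) c by
          ext i; fin_cases i <;> simp,
        show exponent a (b - 2) c + Finsupp.single 2 1 = exponent a (b - 2) (c + 1) by
          ext i; fin_cases i <;> simp,
        exponent_apply_two]
      ring
    · rfl

lemma coeff_X_one_exponent {R : Type*} [CommSemiring R] (a b c : ℕ) :
    coeff (exponent a b c) (X 1 : MvPolynomial (Fin 3) R) = if a = 0 ∧ b = 1 ∧ c = 0 then 1 else 0 := by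
  rw [coeff_X, show Finsupp.single 1 1 = exponent 0 1 0 by ext i; fin_cases i <;> simp]
  simp only [exponent_eq_iff, eq_comm]

def X0Recurrence {α : Type*} [Semiring α] (s : ℕ → ℕ → α) : Prop :=
  ∀ b c, b + c ≠ 0 → ((2 * b + 3 * c - 1 : ℕ) : α) * s b c =
    (if b = 1 ∧ c = 0 then 1 else 0) +
    (if c ≠ 0 then (b + 1) * s (b + 1) (c - 1) else 0) +
    (if 2 ≤ b then 6 * (c + 1) * s (b - 2) (c + 1) else 0)

theorem X0Recurrence.pos {α : Type*} [Semiring α] [PartialOrder α] [IsStrictOrderedRing α]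
    [PosMulReflectLT α] {s : ℕ → ℕ → α} (hs : X0Recurrence s) (b c : ℕ) (hbc : b + c ≠ 0) :
    0 < s b c := by
  have hw : (0 : α) < (2 * b + 3 * c - 1 : ℕ) := Nat.cast_pos.mpr (by omega)
  rw [← mul_pos_iff_of_pos_left hw, hs b c hbc]
  have ih₁ : c ≠ 0 → 0 < s (b + 1) (c - 1) := fun hc => hs.pos (b + 1) (c - 1) (by omega)
  have ih₂ : 2 ≤ b → 0 < s (b - 2) (c + 1) := fun hb => hs.pos (b - 2) (c + 1) (by omega)
  split_ifs with h₁ hc hb hb hc hb hb <;> try omega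
  · simp
  · have := ih₁ hc; have := ih₂ hb; positivity
  · have := ih₁ hc; positivity
  · have := ih₂ hb; positivity
termination_by 2 * b + 3 * c

def signedCoeff (R : P3) (b c : ℕ) : ℂ := (-1) ^ c * coeff (exponent (2 * b + 3 * c - 1) b c) R

lemma neg_one_pow_mul_coeff_exponent (R : P3) {a b c : ℕ} (h : 2 * b + 3 * c = a + 1) :
    (-1) ^ c * coeff (exponent a b c) R = signedCoeff R b c := by
  rw [signedCoeff, show 2 * b + 3 * c - 1 = a by omega]

lemma x0Recurrence_signedCoeff {R : P3} (hR : X0 R = X 1) : X0Recurrence (signedCoeff R) := by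
  intro b c hbc
  obtain ⟨k, hk⟩ : ∃ k, 2 * b + 3 * c = k + 2 := ⟨2 * b + 3 * c - 2, by omega⟩
  have h := congrArg (coeff (exponent k b c)) hR
  rw [coeff_X0_exponent, coeff_X_one_exponent] at h
  have h₀ : (-1) ^ c * ((k + 1) * coeff (exponent (k + 1) b c) R) =
      (k + 1) * signedCoeff R b c := by
    rw [mul_left_comm, neg_one_pow_mul_coeff_exponent R (by omega)]
  have hA : (-1) ^ c * (if c ≠ 0 then (b + 1) * coeff (exponent k (b + 1) (c - 1)) R else 0) =
      -(if c ≠ 0 then (b + 1) * signedCoeff R (b + 1) (c - 1) else 0) := by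
    split_ifs with hc
    · obtain ⟨c, rfl⟩ := Nat.exists_eq_succ_of_ne_zero hc
      have := neg_one_pow_mul_coeff_exponent R (show 2 * (b + 1) + 3 * c = k + 1 by omega)
      rw [Nat.succ_sub_one, pow_succ]
      linear_combination (-(b + 1 : ℂ)) * this
    · simp
  have hB : (-1) ^ c * (if 2 ≤ b then 6 * (c + 1) * coeff (exponent k (b - 2) (c + 1)) R else 0) =
      -(if 2 ≤ b then 6 * (c + 1) * signedCoeff R (b - 2) (c + 1) else 0) := by
    split_ifs with hb
    · have := neg_one_pow_mul_coeff_exponent R (show 2 * (b - 2) + 3 * (c + 1) = k + 1 by omega)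
      rw [pow_succ] at this
      linear_combination (-6 * (c + 1 : ℂ)) * this
    · simp
  have hδ : (-1) ^ c * (if k = 0 ∧ b = 1 ∧ c = 0 then (1 : ℂ) else 0) =
      if b = 1 ∧ c = 0 then 1 else 0 := by
    split_ifs with h₁ h₂ h₂
    · simp [h₁.2.2]
    · omega
    · omega
    · simp
  rw [show 2 * b + 3 * c - 1 = k + 1 by omega]
  push_cast
  linear_combination (-1) ^ c * h - h₀ - hA - hB + hδ

lemma signedCoeff_eq_zero_of_degreeOf_lt {R : P3} {b : ℕ} (hb : degreeOf 1 R < b) (c : ℕ) :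
    signedCoeff R b c = 0 := by
  have hmem : exponent (2 * b + 3 * c - 1) b c ∉ R.support := fun hmem => by
    simpa using (monomial_le_degreeOf 1 hmem).trans_lt hb
  rw [signedCoeff, notMem_support_iff.mp hmem, mul_zero]

/-- There is no polynomial `R ∈ ℂ[x, y, y']` with `X₀(R) = y`. -/
theorem stmt6 : ¬ ∃ R : P3, X0 R = X 1 := by
  rintro ⟨R, hR⟩
  have hpos := (x0Recurrence_signedCoeff hR).pos (degreeOf 1 R + 1) 0 (by omega)
  rw [signedCoeff_eq_zero_of_degreeOf_lt (Nat.lt_succ_self _)] at hpos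
  exact lt_irrefl 0 hpos
end
end

section
/- The Riccati-type ODE 2c'(u) - 7/(9u³) = -2c(u)² has no rational solution c ∈ ℂ(u). -/
/-!
After dividing by 2 the equation reads `c' + c² = a / u³` with `a = 7/18`. Writing `c = p / q` in
lowest terms and clearing denominators gives `u³ (p'q - pq' + p²) = a q²`. So `u³ ∣ q²`, hence
`u² ∣ q` and `u ∣ q'`; cancelling `u³` then leaves `p² ≡ 0 mod u`, so `u` divides both `p` and `q`.
-/

open Polynomial

theorem Prime.sq_dvd_of_pow_three_dvd_sq {M : Type*} [CommMonoidWithZero M] [IsCancelMulZero M]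
    {p a : M} (hp : Prime p) (h : p ^ 3 ∣ a ^ 2) : p ^ 2 ∣ a := by
  obtain ⟨t, rfl⟩ := hp.dvd_of_dvd_pow ((dvd_pow_self p three_ne_zero).trans h)
  rw [mul_pow, pow_succ, mul_dvd_mul_iff_left (pow_ne_zero 2 hp.ne_zero)] at h
  rw [sq]
  exact mul_dvd_mul_left p (hp.dvd_of_dvd_pow h)

theorem Polynomial.not_isCoprime_of_X_pow_three_mul_eq_C_mul_sq {K : Type*} [Field K]
    {p q : K[X]} {a : K} (ha : a ≠ 0)
    (h : X ^ 3 * (derivative p * q - p * derivative q + p ^ 2) = C a * q ^ 2) :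
    ¬IsCoprime p q := by
  intro hpq
  have hXq : X ^ 2 ∣ q :=
    prime_X.sq_dvd_of_pow_three_dvd_sq ((isUnit_C.2 ha.isUnit).dvd_mul_left.1 ⟨_, h.symm⟩)
  obtain ⟨s, rfl⟩ := hXq
  have hp :
      p ^ 2 = X * (C a * s ^ 2 - derivative p * X * s + p * (C 2 * s + X * derivative s)) := by
    refine mul_left_cancel₀ (pow_ne_zero 3 X_ne_zero) ?_
    rw [derivative_mul, derivative_X_sq] at h
    linear_combination h
  exact not_isUnit_X (hpq.isUnit_of_dvd' (prime_X.dvd_of_dvd_pow ⟨_, hp⟩)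
    ((dvd_pow_self X two_ne_zero).mul_right s))

namespace RatFunc

variable {K : Type*} [Field K]

theorem derivation_algebraMap (D : Derivation K K⟮X⟯ K⟮X⟯) (hD : D X = 1) (f : K[X]) :
    D (algebraMap K[X] K⟮X⟯ f) = algebraMap K[X] K⟮X⟯ (derivative f) := by
  rw [← aeval_X_left_eq_algebraMap, ← aeval_X_left_eq_algebraMap, D.comp_aeval_eq, hD,
    smul_eq_mul, mul_one]

theorem derivation_add_sq_ne_C_div_X_pow_three (D : Derivation K K⟮X⟯ K⟮X⟯) (hD : D X = 1)
    {a : K} (ha : a ≠ 0) (c : K⟮X⟯) : D c + c ^ 2 ≠ C a / X ^ 3 := by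
  intro h
  refine not_isCoprime_of_X_pow_three_mul_eq_C_mul_sq ha (algebraMap_injective K ?_)
    (isCoprime_num_denom c)
  have hq : algebraMap K[X] K⟮X⟯ c.denom ≠ 0 := algebraMap_ne_zero c.denom_ne_zero
  have hX : (X : K⟮X⟯) ≠ 0 := X_ne_zero
  rw [← num_div_denom c, D.leibniz_div, derivation_algebraMap D hD,
    derivation_algebraMap D hD] at h
  simp only [map_mul, map_sub, map_add, map_pow, algebraMap_X, algebraMap_C, smul_eq_mul] at h ⊢
  field_simp at h
  linear_combination h

end RatFunc

/-- The Riccati-type ODE `2c'(u) - 7/(9u³) = -2c(u)²` has no rational solution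
`c ∈ ℂ(u)`. Here `D` is the (unique) `ℂ`-derivation of `ℂ(u) = RatFunc ℂ` with
`D u = 1`, i.e. differentiation with respect to `u`. -/
theorem stmt8 (D : Derivation ℂ (RatFunc ℂ) (RatFunc ℂ)) (hD : D RatFunc.X = 1)
    (c : RatFunc ℂ) :
    ¬ (2 * D c - 7 / (9 * RatFunc.X ^ 3) = -2 * c ^ 2) := by
  intro h
  refine RatFunc.derivation_add_sq_ne_C_div_X_pow_three D hD (a := 7 / 18) (by norm_num) c ?_
  have hX : (RatFunc.X : RatFunc ℂ) ≠ 0 := RatFunc.X_ne_zero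
  rw [map_div₀, map_ofNat, map_ofNat]
  field_simp at h ⊢
  linear_combination h
end

section
/- The equation 2c'(u) - 7/(9u³) = -2c(u)² admits no solution c = c(u) ∈ ℂ(u). -/
open Polynomial RatFunc

private lemma Dmap (D : Derivation ℂ (RatFunc ℂ) (RatFunc ℂ)) (hD : D RatFunc.X = 1)
    (p : ℂ[X]) :
    D (algebraMap ℂ[X] (RatFunc ℂ) p) = algebraMap ℂ[X] (RatFunc ℂ) (derivative p) := by
  have ha : ∀ r : ℂ[X], algebraMap ℂ[X] (RatFunc ℂ) r = Polynomial.aeval RatFunc.X r := by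
    intro r
    rw [← RatFunc.algebraMap_X (K := ℂ), aeval_algebraMap_apply, aeval_X_left_apply]
  rw [ha, ha, Derivation.comp_aeval_eq, hD, smul_eq_mul, mul_one]

/-- There do not exist `c = c(u) ∈ ℂ(u)` (and the associated
`d = -3c/y'² - (1/(9u³))(7x + 20y/y' - 24y⁴/y'³)`) such that
`2c'(u) - 7/(9u³) = -2c(u)²`: the equation admits no rational solution `c ∈ ℂ(u)`,
since a solution would need a pole of non-integer order at `u = 0`.
Here `D` is the (unique) `ℂ`-derivation of `ℂ(u) = RatFunc ℂ` with `D u = 1`. -/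
theorem stmt18 (D : Derivation ℂ (RatFunc ℂ) (RatFunc ℂ)) (hD : D RatFunc.X = 1) :
    ¬ ∃ c : RatFunc ℂ, 2 * D c - 7 / (9 * RatFunc.X ^ 3) = -2 * c ^ 2 := by
  rintro ⟨c, hc⟩
  set A := algebraMap ℂ[X] (RatFunc ℂ) with hA
  set p := c.num with hp
  set q := c.denom with hq
  have hq0 : q ≠ 0 := c.denom_ne_zero
  have hqR : A q ≠ 0 := RatFunc.algebraMap_ne_zero hq0
  have hXR : (RatFunc.X : RatFunc ℂ) ≠ 0 := RatFunc.X_ne_zero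
  have hpq : A p = c * A q := by
    have h := c.num_div_denom
    rw [div_eq_iff hqR] at h
    exact h
  have hDc : D c * (A q) ^ 2 = A (derivative p) * A q - A p * A (derivative q) := by
    have h1 : A (derivative p) = c * A (derivative q) + A q * D c := by
      rw [← Dmap D hD, hpq, Derivation.leibniz, Dmap D hD, smul_eq_mul, smul_eq_mul]
    rw [h1, hpq]; ring
  have hXa : (RatFunc.X : RatFunc ℂ) = A Polynomial.X := (RatFunc.algebraMap_X).symm
  have h9 : (9 : RatFunc ℂ) * RatFunc.X ^ 3 ≠ 0 := by
    have h : (9 : RatFunc ℂ) * RatFunc.X ^ 3 = A (9 * Polynomial.X ^ 3) := by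
      simp [map_mul, map_pow, map_ofNat, hXa]
    rw [h]
    exact RatFunc.algebraMap_ne_zero
      (mul_ne_zero (by norm_num) (pow_ne_zero _ Polynomial.X_ne_zero))
  have hc2 : 2 * D c * (9 * RatFunc.X ^ 3) - 7 = -2 * c ^ 2 * (9 * RatFunc.X ^ 3) := by
    have h := congrArg (· * (9 * RatFunc.X ^ 3)) hc
    simpa [sub_mul, div_mul_cancel₀ (7 : RatFunc ℂ) h9] using h
  have key : (7 : ℂ[X]) * q ^ 2
      = 18 * Polynomial.X ^ 3 * (q * derivative p - p * derivative q + p ^ 2) := by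
    apply IsFractionRing.injective ℂ[X] (RatFunc ℂ)
    simp only [map_mul, map_add, map_sub, map_pow, map_ofNat, ← hXa, RatFunc.algebraMap_X]
    linear_combination (-(A q)^2) * hc2 + 18 * RatFunc.X^3 * hDc
      - 18 * RatFunc.X^3 * (A p + c * A q) * hpq
  set W := q * derivative p - p * derivative q + p ^ 2 with hW
  have hWne : W ≠ 0 := by
    intro h
    rw [h, mul_zero] at key
    exact hq0 (pow_eq_zero_iff (n := 2) (by norm_num) |>.mp
      (by simpa using mul_eq_zero.mp key |>.resolve_left (by norm_num)))
  have hpne : p ≠ 0 := by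
    intro h
    apply hWne
    simp [hW, h]
  have hX3 : (18 : ℂ[X]) * Polynomial.X ^ 3 ≠ 0 :=
    mul_ne_zero (by norm_num) (pow_ne_zero _ Polynomial.X_ne_zero)
  have rm7 : rootMultiplicity 0 (7 : ℂ[X]) = 0 :=
    rootMultiplicity_eq_zero (by norm_num [Polynomial.IsRoot])
  have rm18 : rootMultiplicity 0 (18 : ℂ[X]) = 0 :=
    rootMultiplicity_eq_zero (by norm_num [Polynomial.IsRoot])
  have rmX3 : rootMultiplicity 0 (Polynomial.X ^ 3 : ℂ[X]) = 3 := by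
    simpa using rootMultiplicity_X_sub_C_pow (0 : ℂ) 3
  have rmq2 : rootMultiplicity 0 (q ^ 2) = 2 * rootMultiplicity 0 q := by
    rw [sq, rootMultiplicity_mul (mul_ne_zero hq0 hq0)]; ring
  have hmul := congrArg (rootMultiplicity 0) key
  rw [rootMultiplicity_mul (mul_ne_zero (by norm_num : (7:ℂ[X]) ≠ 0) (pow_ne_zero 2 hq0)),
    rootMultiplicity_mul (mul_ne_zero hX3 hWne),
    rootMultiplicity_mul (mul_ne_zero (by norm_num : (18:ℂ[X]) ≠ 0)
      (pow_ne_zero 3 Polynomial.X_ne_zero)),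
    rm7, rm18, rmX3, rmq2] at hmul
  have hm2 : 2 ≤ rootMultiplicity 0 q := by omega
  have hXq : (Polynomial.X ^ 2 : ℂ[X]) ∣ q := by
    have h := (le_rootMultiplicity_iff hq0).mp hm2
    simpa using h
  obtain ⟨t, ht⟩ := hXq
  have hqe0 : Polynomial.eval 0 q = 0 := by rw [ht]; simp
  have hq'0 : Polynomial.eval 0 (derivative q) = 0 := by
    rw [ht]; simp [Polynomial.derivative_mul]
  have hp0 : Polynomial.eval 0 p ≠ 0 := by
    obtain ⟨a, b, hab⟩ := c.isCoprime_num_denom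
    intro h
    have h1 := congrArg (Polynomial.eval 0) hab
    simp [← hp, ← hq, h, hqe0] at h1
  have hw0 : rootMultiplicity 0 W = 0 := by
    apply rootMultiplicity_eq_zero
    simp only [Polynomial.IsRoot, hW, Polynomial.eval_add, Polynomial.eval_sub,
      Polynomial.eval_mul, Polynomial.eval_pow, hqe0, hq'0, zero_mul, mul_zero,
      sub_zero, zero_add]
    exact pow_ne_zero 2 hp0
  omega
end
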